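/- In the overdetermined forest fire model with epistemic state K = {u : u ⊨ U_L ∧ (¬U_MD ∨ U_B)}, the conjunction MD = 1 is a non-trivial modified HP explanation of FF = 1, while L = 1 is a modified HP explanation that is not non-trivial (EX4' fails for it). -/
import Mathlib


namespace Causal

/-- A causal model: a structural equation for each endogenous variable,
    taking a context (setting of exogenous variables) and a setting of the
    endogenous variables. -/
structure Model (Vu Vv : Type) (Du : Vu → Type) (Dv : Vv → Type) where
  F : (i : Vv) → ((u : Vu) → Du u) → ((j : Vv) → Dv j) → Dv i

variable {Vu Vv : Type} {Du : Vu → Type} {Dv : Vv → Type}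

abbrev Ctx (Du : Vu → Type) := (u : Vu) → Du u
abbrev World (Dv : Vv → Type) := (i : Vv) → Dv i
abbrev Event (Dv : Vv → Type) := World Dv → Prop
/-- A conjunction of primitive events X = x, as a partial assignment. -/
abbrev PA (Dv : Vv → Type) := (i : Vv) → Option (Dv i)

/-- Acyclicity: a well-founded strict order such that each structural equation
    depends only on endogenous variables strictly below it. -/
def Model.Acyclic (M : Model Vu Vv Du Dv) : Prop :=
  ∃ r : Vv → Vv → Prop, WellFounded r ∧
    ∀ (i : Vv) (u : Ctx Du) (s s' : World Dv),
      (∀ j, r j i → s j = s' j) → M.F i u s = M.F i u s'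

/-- s is a solution of the causal setting (M, u). -/
def Model.Solves (M : Model Vu Vv Du Dv) (u : Ctx Du) (s : World Dv) : Prop :=
  ∀ i, s i = M.F i u s

/-- (M, u) ⊨ φ : every solution (in particular the unique actual world) satisfies φ. -/
def Model.sat (M : Model Vu Vv Du Dv) (u : Ctx Du) (φ : Event Dv) : Prop :=
  ∀ s, M.Solves u s → φ s

namespace PA

def event (g : PA Dv) : Event Dv := fun s => ∀ i v, g i = some v → s i = v

def subset (g h : PA Dv) : Prop := ∀ i v, g i = some v → h i = some v

def ssubset (g h : PA Dv) : Prop := subset g h ∧ g ≠ h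

def union (g h : PA Dv) : PA Dv := fun i => (g i).orElse (fun _ => h i)

def sameDom (g h : PA Dv) : Prop := ∀ i, (g i).isSome ↔ (h i).isSome

def Nonempty (g : PA Dv) : Prop := ∃ i, (g i).isSome

def disjoint (g h : PA Dv) : Prop := ∀ i, (g i).isSome → h i = none

/-- Pointwise difference condition: x_i ≠ x_i' for each X_i ∈ X. -/
def diff (g h : PA Dv) : Prop := ∀ i v v', g i = some v → h i = some v' → v ≠ v'

end PA

/-- Intervention M_{X←x}. -/
def Model.intervene (M : Model Vu Vv Du Dv) (g : PA Dv) : Model Vu Vv Du Dv where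
  F i u s := (g i).getD (M.F i u s)

/-- AC1 : (M,u) ⊨ (X = x) ∧ φ. -/
def AC1 (M : Model Vu Vv Du Dv) (u : Ctx Du) (g : PA Dv) (φ : Event Dv) : Prop :=
  M.sat u (fun s => g.event s ∧ φ s)

/-- AC2 : there are W ⊆ V (with its actual setting w) and a setting x' of X with
    (M,u) ⊨ [X ← x', W ← w]¬φ. -/
def AC2 (M : Model Vu Vv Du Dv) (u : Ctx Du) (g : PA Dv) (φ : Event Dv) : Prop :=
  ∃ w x' : PA Dv, x'.sameDom g ∧ M.sat u w.event ∧
    (M.intervene (x'.union w)).sat u (fun s => ¬ φ s)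

/-- Weak actual cause: AC1–AC2. -/
def WeakCause (M : Model Vu Vv Du Dv) (u : Ctx Du) (g : PA Dv) (φ : Event Dv) : Prop :=
  AC1 M u g φ ∧ AC2 M u g φ

/-- Actual cause: AC1–AC3. -/
def ActualCause (M : Model Vu Vv Du Dv) (u : Ctx Du) (g : PA Dv) (φ : Event Dv) : Prop :=
  WeakCause M u g φ ∧ ∀ h : PA Dv, h.ssubset g → ¬ WeakCause M u h φ

/-- X = x is a partial cause (subset of a cause) w.r.t. a notion of cause. -/
def PartialCause (Cause : Model Vu Vv Du Dv → Ctx Du → PA Dv → Event Dv → Prop)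
    (M : Model Vu Vv Du Dv) (u : Ctx Du) (g : PA Dv) (φ : Event Dv) : Prop :=
  ∃ h : PA Dv, g.subset h ∧ Cause M u h φ

/-- Some conjunct of g is part of an actual cause of φ. -/
def IntersectsActualCause (M : Model Vu Vv Du Dv) (u : Ctx Du) (g : PA Dv) (φ : Event Dv) : Prop :=
  ∃ (i : Vv) (v : Dv i) (c : PA Dv), g i = some v ∧ c i = some v ∧ ActualCause M u c φ

/-- Sufficient cause, clauses SC1–SC3. -/
def SuffCauseCore (M : Model Vu Vv Du Dv) (u : Ctx Du) (g : PA Dv) (φ : Event Dv) : Prop :=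
  AC1 M u g φ ∧ IntersectsActualCause M u g φ ∧
    ∀ u' : Ctx Du, (M.intervene g).sat u' φ

/-- Sufficient cause: SC1–SC4. -/
def SuffCause (M : Model Vu Vv Du Dv) (u : Ctx Du) (g : PA Dv) (φ : Event Dv) : Prop :=
  SuffCauseCore M u g φ ∧ ∀ h : PA Dv, h.ssubset g → ¬ SuffCauseCore M u h φ

/-! ### Original HP explanations -/

/-- EX2 : g is a weak actual cause of φ in every plausible context where g holds. -/
def EX2 (M : Model Vu Vv Du Dv) (K : Set (Ctx Du)) (g : PA Dv) (φ : Event Dv) : Prop :=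
  ∀ u ∈ K, M.sat u g.event → WeakCause M u g φ

/-- Original HP explanation: EX1–EX4. -/
def OrigExpl (M : Model Vu Vv Du Dv) (K : Set (Ctx Du)) (g : PA Dv) (φ : Event Dv) : Prop :=
  (∀ u ∈ K, M.sat u φ) ∧
  EX2 M K g φ ∧
  (∀ h : PA Dv, h.ssubset g → ¬ EX2 M K h φ) ∧
  ((∃ u ∈ K, M.sat u (fun s => ¬ g.event s)) ∧ (∃ u' ∈ K, M.sat u' g.event))

/-! ### Modified HP explanations -/

/-- EX1' : (a) g intersects an actual cause in any plausible context where g and φ hold,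
    and (b) g is sufficient to bring about φ in any plausible context. -/
def EX1' (M : Model Vu Vv Du Dv) (K : Set (Ctx Du)) (g : PA Dv) (φ : Event Dv) : Prop :=
  ∀ u ∈ K,
    (M.sat u (fun s => g.event s ∧ φ s) → IntersectsActualCause M u g φ) ∧
    (M.intervene g).sat u φ

/-- Modified HP explanation: EX1'–EX3'. -/
def ModExpl (M : Model Vu Vv Du Dv) (K : Set (Ctx Du)) (g : PA Dv) (φ : Event Dv) : Prop :=
  EX1' M K g φ ∧
  (∀ h : PA Dv, h.ssubset g → ¬ EX1' M K h φ) ∧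
  (∃ u ∈ K, M.sat u (fun s => g.event s ∧ φ s))

/-- EX4' : non-triviality. -/
def EX4' (M : Model Vu Vv Du Dv) (K : Set (Ctx Du)) (g : PA Dv) (φ : Event Dv) : Prop :=
  ∃ u ∈ K, M.sat u (fun s => ¬ g.event s ∧ φ s)

/-- Non-trivial modified HP explanation: EX1'–EX4'. -/
def ModExplNT (M : Model Vu Vv Du Dv) (K : Set (Ctx Du)) (g : PA Dv) (φ : Event Dv) : Prop :=
  ModExpl M K g φ ∧ EX4' M K g φ

/-! ### Borner explanations -/

/-- E1–E2, with witness S = s. -/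
def BornerE12With (M : Model Vu Vv Du Dv) (K : Set (Ctx Du)) (g s : PA Dv) (φ : Event Dv) : Prop :=
  g.disjoint s ∧
  ∀ u ∈ K, (M.sat u g.event → SuffCause M u (g.union s) φ) ∧ M.sat u s.event

def BornerE12 (M : Model Vu Vv Du Dv) (K : Set (Ctx Du)) (g : PA Dv) (φ : Event Dv) : Prop :=
  ∃ s : PA Dv, BornerE12With M K g s φ

/-- Potential Borner explanation: E1–E4. -/
def PotBorner (M : Model Vu Vv Du Dv) (K : Set (Ctx Du)) (g : PA Dv) (φ : Event Dv) : Prop :=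
  BornerE12 M K g φ ∧
  (∃ u ∈ K, M.sat u (fun s => g.event s ∧ φ s)) ∧
  (∃ u ∈ K, M.sat u (fun s => ¬ g.event s ∧ φ s))

/-- Parsimonious potential Borner explanation: E1–E4, E6. -/
def ParsPotBorner (M : Model Vu Vv Du Dv) (K : Set (Ctx Du)) (g : PA Dv) (φ : Event Dv) : Prop :=
  PotBorner M K g φ ∧ ∀ h : PA Dv, h.ssubset g → ¬ BornerE12 M K h φ

/-- Actual Borner explanation: E1–E3, E5. -/
def ActBorner (M : Model Vu Vv Du Dv) (K : Set (Ctx Du)) (g : PA Dv) (φ : Event Dv) : Prop :=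
  BornerE12 M K g φ ∧
  (∃ u ∈ K, M.sat u (fun s => g.event s ∧ φ s)) ∧
  (∀ u ∈ K, M.sat u (fun s => g.event s ∧ φ s))

/-! ### Contrastive causes (CC1–CC5), parameterised by a notion of cause -/

/-- CC1–CC4 for the pair ⟨g, g'⟩ and ⟨φ, ψ⟩. -/
def CCcore (Cause : Model Vu Vv Du Dv → Ctx Du → PA Dv → Event Dv → Prop)
    (M : Model Vu Vv Du Dv) (u : Ctx Du) (g g' : PA Dv) (φ ψ : Event Dv) : Prop :=
  g.sameDom g' ∧
  PartialCause Cause M u g φ ∧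
  M.sat u (fun s => ¬ ψ s) ∧
  (∃ w : PA Dv, w.Nonempty ∧ PartialCause Cause (M.intervene w) u g' ψ) ∧
  g.diff g'

/-- Contrastive cause: CC1–CC5. -/
def ContrastiveCause (Cause : Model Vu Vv Du Dv → Ctx Du → PA Dv → Event Dv → Prop)
    (M : Model Vu Vv Du Dv) (u : Ctx Du) (g g' : PA Dv) (φ ψ : Event Dv) : Prop :=
  CCcore Cause M u g g' φ ψ ∧
  ∀ h h' : PA Dv, g.subset h → g'.subset h' → CCcore Cause M u h h' φ ψ → h = g ∧ h' = g'

/-- Strict refinement of a pair (used for pair-minimality clauses). -/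
def PairSSub (h h' g g' : PA Dv) : Prop :=
  PA.subset h g ∧ PA.subset h' g' ∧ ¬ (h = g ∧ h' = g')

/-! ### Miller contrastive explanations (CE1–CE4) -/

/-- CE2 : contrastive weak actual cause in every plausible context where g holds. -/
def CE2 (M : Model Vu Vv Du Dv) (K : Set (Ctx Du)) (g g' : PA Dv) (φ ψ : Event Dv) : Prop :=
  ∀ u ∈ K, M.sat u g.event → ContrastiveCause WeakCause M u g g' φ ψ

/-- Miller contrastive explanation: CE1–CE4. -/
def MillerCE (M : Model Vu Vv Du Dv) (K : Set (Ctx Du)) (g g' : PA Dv) (φ ψ : Event Dv) : Prop :=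
  (∀ u ∈ K, M.sat u (fun s => φ s ∧ ¬ ψ s)) ∧
  CE2 M K g g' φ ψ ∧
  (∀ h h' : PA Dv, PairSSub h h' g g' → ¬ CE2 M K h h' φ ψ) ∧
  (((∃ u ∈ K, M.sat u (fun s => ¬ g.event s)) ∧ (∃ u' ∈ K, M.sat u' g.event)) ∧
   (∃ w : PA Dv, w.Nonempty ∧ w ≠ g ∧
     (∃ u ∈ K, (M.intervene w).sat u (fun s => ¬ g'.event s)) ∧
     (∃ u' ∈ K, (M.intervene w).sat u' g'.event)))

/-! ### Modular contrastive explanations (Definition 3), parameterised by a notion of explanation -/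

/-- CE1'–CE3'. -/
def ModularCore (Expl : Model Vu Vv Du Dv → Set (Ctx Du) → PA Dv → Event Dv → Prop)
    (M : Model Vu Vv Du Dv) (K : Set (Ctx Du)) (g g' : PA Dv) (φ ψ : Event Dv) : Prop :=
  g.sameDom g' ∧
  (∃ h : PA Dv, g.subset h ∧ Expl M K h φ) ∧
  (∃ w : PA Dv, w.Nonempty ∧ ∃ h : PA Dv, g'.subset h ∧ Expl (M.intervene w) K h ψ) ∧
  g.diff g'

/-- Modular contrastive explanation: CE1'–CE4'. -/
def Modular (Expl : Model Vu Vv Du Dv → Set (Ctx Du) → PA Dv → Event Dv → Prop)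
    (M : Model Vu Vv Du Dv) (K : Set (Ctx Du)) (g g' : PA Dv) (φ ψ : Event Dv) : Prop :=
  ModularCore Expl M K g g' φ ψ ∧
  ∀ h h' : PA Dv, g.subset h → g'.subset h' → ModularCore Expl M K h h' φ ψ → h = g ∧ h' = g'

/-! ### Modified HP contrastive explanations (Definition 1: CH1–CH4) -/

/-- CH1(a)–(c) for a single context u. -/
def CH1abc (M : Model Vu Vv Du Dv) (u : Ctx Du) (g g' : PA Dv) (φ ψ : Event Dv) : Prop :=
  (M.sat u (fun s => g.event s ∧ φ s ∧ ¬ ψ s) →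
    ∃ (i : Vv) (v v' : Dv i) (c c' : PA Dv), g i = some v ∧ g' i = some v' ∧
      c i = some v ∧ c' i = some v' ∧ ContrastiveCause ActualCause M u c c' φ ψ) ∧
  (∃ s s' : PA Dv, s.sameDom s' ∧ g.disjoint s ∧
    (M.intervene (g.union s)).sat u φ ∧
    (∃ w : PA Dv, w.Nonempty ∧ w ≠ g ∧
      ((M.intervene w).intervene (g'.union s')).sat u ψ)) ∧
  g.diff g'

/-- CH1 : for each u ∈ K, (a)–(c) and maximality (d). -/
def CH1 (M : Model Vu Vv Du Dv) (K : Set (Ctx Du)) (g g' : PA Dv) (φ ψ : Event Dv) : Prop :=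
  ∀ u ∈ K, CH1abc M u g g' φ ψ ∧
    ∀ h h' : PA Dv, g.subset h → g'.subset h' → CH1abc M u h h' φ ψ → h = g ∧ h' = g'

/-- Modified HP contrastive explanation: CH1–CH3. -/
def ModCE (M : Model Vu Vv Du Dv) (K : Set (Ctx Du)) (g g' : PA Dv) (φ ψ : Event Dv) : Prop :=
  CH1 M K g g' φ ψ ∧
  (∀ h h' : PA Dv, PairSSub h h' g g' → ¬ CH1 M K h h' φ ψ) ∧
  (∃ u ∈ K, M.sat u (fun s => g.event s ∧ φ s ∧ ¬ ψ s))

/-- CH4 : non-triviality. -/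
def CH4 (M : Model Vu Vv Du Dv) (K : Set (Ctx Du)) (g g' : PA Dv) (φ ψ : Event Dv) : Prop :=
  (∃ u ∈ K, M.sat u (fun s => ¬ g.event s ∧ φ s)) ∧
  (∃ w : PA Dv, w.Nonempty ∧ w ≠ g ∧
    ∃ u ∈ K, (M.intervene w).sat u (fun s => ¬ g'.event s ∧ ψ s))

/-! ### Borner contrastive explanations (Definition 2: CB1–CB6) -/

/-- CB1–CB2 with witness pair ⟨S = s, S = s'⟩. -/
def CB12With (M : Model Vu Vv Du Dv) (K : Set (Ctx Du)) (g g' s s' : PA Dv) (φ ψ : Event Dv) : Prop :=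
  s.sameDom s' ∧ g.disjoint s ∧
  ∀ u ∈ K,
    (M.sat u g.event → ContrastiveCause SuffCause M u (g.union s) (g'.union s') φ ψ) ∧
    M.sat u s.event ∧
    (∃ w : PA Dv, w.Nonempty ∧ w ≠ g ∧ (M.intervene w).sat u s'.event)

def CB12 (M : Model Vu Vv Du Dv) (K : Set (Ctx Du)) (g g' : PA Dv) (φ ψ : Event Dv) : Prop :=
  ∃ s s' : PA Dv, CB12With M K g g' s s' φ ψ

/-- Potential Borner contrastive explanation: CB1–CB4. -/
def PotBornerCE (M : Model Vu Vv Du Dv) (K : Set (Ctx Du)) (g g' : PA Dv) (φ ψ : Event Dv) : Prop :=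
  CB12 M K g g' φ ψ ∧
  (∃ u ∈ K, M.sat u (fun s => g.event s ∧ φ s ∧ ¬ ψ s)) ∧
  CH4 M K g g' φ ψ

/-- Actual Borner contrastive explanation: CB1–CB3, CB5. -/
def ActBornerCE (M : Model Vu Vv Du Dv) (K : Set (Ctx Du)) (g g' : PA Dv) (φ ψ : Event Dv) : Prop :=
  CB12 M K g g' φ ψ ∧
  (∃ u ∈ K, M.sat u (fun s => g.event s ∧ φ s ∧ ¬ ψ s)) ∧
  (∀ u ∈ K, M.sat u (fun s => g.event s ∧ φ s ∧ ¬ ψ s))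

end Causal

namespace OFF
open Causal

inductive XU | uL | uMD | uB
  deriving DecidableEq
inductive XV | L | MD | B | FF
  deriving DecidableEq

/-- The overdetermined forest fire model:
    L := U_L, MD := U_MD, B := U_B, FF := (MD ∧ B) ∨ L. -/
def M : Model XU XV (fun _ => Bool) (fun _ => Bool) where
  F i u s :=
    match i with
    | .L => u .uL
    | .MD => u .uMD
    | .B => u .uB
    | .FF => (s .MD && s .B) || s .L

/-- K = {u : u ⊨ U_L ∧ (¬U_MD ∨ U_B)}. -/
def K : Set (Ctx (fun _ : XU => Bool)) :=
  {u | u .uL = true ∧ (u .uMD = false ∨ u .uB = true)}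

/-- The event FF = 1. -/
def φFF : Event (fun _ : XV => Bool) := fun s => s .FF = true

/-- The event FF = 0. -/
def ψnFF : Event (fun _ : XV => Bool) := fun s => s .FF = false

/-- The conjunction L = 1. -/
def paL1 : PA (fun _ : XV => Bool) := fun i =>
  match i with | .L => some true | _ => none

/-- The conjunction L = 0. -/
def paL0 : PA (fun _ : XV => Bool) := fun i =>
  match i with | .L => some false | _ => none

/-- The conjunction MD = 1. -/
def paMD1 : PA (fun _ : XV => Bool) := fun i =>
  match i with | .MD => some true | _ => none

/-- The conjunction MD = 0. -/
def paMD0 : PA (fun _ : XV => Bool) := fun i =>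
  match i with | .MD => some false | _ => none

/-- The conjunction L = 1 ∧ MD = 0. -/
def paL1MD0 : PA (fun _ : XV => Bool) := fun i =>
  match i with | .L => some true | .MD => some false | _ => none

/-- The conjunction B = 1 ∧ MD = 1. -/
def paB1MD1 : PA (fun _ : XV => Bool) := fun i =>
  match i with | .B => some true | .MD => some true | _ => none

end OFF

namespace OFF
open Causal

/-- empty partial assignment -/
def pa0 : PA (fun _ : XV => Bool) := fun _ => none

/-- The conjunction L = 1 ∧ MD = 1. -/
def paL1MD1 : PA (fun _ : XV => Bool) := fun i =>
  match i with | .L => some true | .MD => some true | _ => none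

/-- unique solution of M.intervene g in context u -/
def sol (g : PA (fun _ : XV => Bool)) (u : Ctx (fun _ : XU => Bool)) :
    World (fun _ : XV => Bool) := fun i =>
  match i with
  | .L => (g .L).getD (u .uL)
  | .MD => (g .MD).getD (u .uMD)
  | .B => (g .B).getD (u .uB)
  | .FF => (g .FF).getD (((g .MD).getD (u .uMD) && (g .B).getD (u .uB)) || (g .L).getD (u .uL))

lemma solves_int (g : PA (fun _ : XV => Bool)) (u : Ctx (fun _ : XU => Bool))
    (s : World (fun _ : XV => Bool)) : (M.intervene g).Solves u s ↔ s = sol g u := by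
  constructor
  · intro h
    have hL := h .L; have hMD := h .MD; have hB := h .B; have hFF := h .FF
    simp only [M, Model.intervene] at hL hMD hB hFF
    funext i
    cases i
    · exact hL
    · exact hMD
    · exact hB
    · show s .FF = _
      rw [hFF, hL, hMD, hB]; rfl
  · rintro rfl i; cases i <;> rfl

lemma solves_M (u : Ctx (fun _ : XU => Bool))
    (s : World (fun _ : XV => Bool)) : M.Solves u s ↔ s = sol pa0 u := by
  constructor
  · intro h
    have hL := h .L; have hMD := h .MD; have hB := h .B; have hFF := h .FF
    simp only [M] at hL hMD hB hFF
    funext i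
    cases i
    · exact hL
    · exact hMD
    · exact hB
    · show s .FF = _
      rw [hFF, hL, hMD, hB]; rfl
  · rintro rfl i; cases i <;> rfl

lemma sat_int (g : PA (fun _ : XV => Bool)) (u : Ctx (fun _ : XU => Bool))
    (φ : Event (fun _ : XV => Bool)) : (M.intervene g).sat u φ ↔ φ (sol g u) := by
  constructor
  · intro h; exact h _ ((solves_int g u _).2 rfl)
  · intro h s hs; rw [(solves_int g u s).1 hs]; exact h

lemma sat_M (u : Ctx (fun _ : XU => Bool))
    (φ : Event (fun _ : XV => Bool)) : M.sat u φ ↔ φ (sol pa0 u) := by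
  constructor
  · intro h; exact h _ ((solves_M u _).2 rfl)
  · intro h s hs; rw [(solves_M u s).1 hs]; exact h

end OFF

namespace OFF
open Causal

/-- The conjunction L = 0 ∧ MD = 0. -/
def paL0MD0 : PA (fun _ : XV => Bool) := fun i =>
  match i with | .L => some false | .MD => some false | _ => none

lemma samedom_none {x' h : PA (fun _ : XV => Bool)} (hdom : x'.sameDom h)
    (i : XV) (hi : h i = none) : x' i = none := by
  have := hdom i
  rw [hi] at this
  simpa using this

lemma getD_actual {u : Ctx (fun _ : XU => Bool)} {w : PA (fun _ : XV => Bool)}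
    (hw' : ∀ i v, w i = some v → sol pa0 u i = v) (i : XV) :
    (w i).getD (sol pa0 u i) = sol pa0 u i := by
  cases hwi : w i with
  | none => rfl
  | some v => exact (hw' i v hwi).symm

lemma sol_FF (g : PA (fun _ : XV => Bool)) (u : Ctx (fun _ : XU => Bool)) :
    sol g u .FF = (g .FF).getD
      (((g .MD).getD (u .uMD) && (g .B).getD (u .uB)) || (g .L).getD (u .uL)) := rfl

/-- In any context with u_L = true, no all-`none` assignment is a weak cause of FF = 1. -/
lemma not_weak_none (u : Ctx (fun _ : XU => Bool)) (hL : u .uL = true)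
    (h : PA (fun _ : XV => Bool)) (hall : ∀ i, h i = none) :
    ¬ WeakCause M u h φFF := by
  rintro ⟨-, w, x', hdom, hw, hsat⟩
  have hw' := (sat_M u _).1 hw
  have hx : ∀ i, x' i = none := fun i => samedom_none hdom i (hall i)
  have hU : ∀ i, (x'.union w) i = w i := by
    intro i; simp [PA.union, hx i]
  apply (sat_int _ u _).1 hsat
  show sol (x'.union w) u .FF = true
  rw [sol_FF, hU, hU, hU, hU]
  have hl : (w .L).getD (u .uL) = true := by
    have := getD_actual hw' .L
    simp only [sol, pa0, Option.getD_none] at this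
    rw [this, hL]
  rw [hl, Bool.or_true]
  cases hwFF : w .FF with
  | none => rfl
  | some v =>
    have := hw' .FF v hwFF
    simp only [sol, pa0, Option.getD_none] at this
    simp [← this, hL]

/-- In the all-true context, L = 1 ∧ MD = 1 is an actual cause of FF = 1. -/
lemma ac_L1MD1 (u : Ctx (fun _ : XU => Bool)) (hL : u .uL = true)
    (hMD : u .uMD = true) (hB : u .uB = true) :
    ActualCause M u paL1MD1 φFF := by
  refine ⟨⟨?_, ?_⟩, ?_⟩
  · -- AC1
    refine (sat_M u _).2 ⟨?_, ?_⟩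
    · intro i v hv
      cases i <;> simp_all [paL1MD1, sol, pa0]
    · show sol pa0 u .FF = true
      simp [sol, pa0, hL]
  · -- AC2
    refine ⟨pa0, paL0MD0, ?_, ?_, ?_⟩
    · intro i; cases i <;> simp [paL0MD0, paL1MD1, PA.sameDom]
    · refine (sat_M u _).2 ?_
      intro i v hv; simp [pa0] at hv
    · refine (sat_int _ u _).2 ?_
      show ¬ sol (paL0MD0.union pa0) u .FF = true
      simp [sol, PA.union, paL0MD0, pa0]
  · -- AC3
    rintro h ⟨hsub, hne⟩ hwk
    have hhB : h .B = none := by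
      cases hh : h .B with
      | none => rfl
      | some v => simpa [paL1MD1] using hsub _ v hh
    have hhFF : h .FF = none := by
      cases hh : h .FF with
      | none => rfl
      | some v => simpa [paL1MD1] using hsub _ v hh
    cases hhL : h .L with
    | some v =>
      have hv : v = true := by simpa [paL1MD1] using hsub _ v hhL
      subst hv
      cases hhMD : h .MD with
      | some v' =>
        have hv' : v' = true := by simpa [paL1MD1] using hsub _ v' hhMD
        subst hv'
        exact hne (funext fun j => by cases j <;> simp [paL1MD1, hhL, hhMD, hhB, hhFF])
      | none =>
        -- h = {L = 1}: intervening on L cannot falsify FF since MD = B = 1 stays actual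
        obtain ⟨-, w, x', hdom, hw, hsat⟩ := hwk
        have hw' := (sat_M u _).1 hw
        apply (sat_int _ u _).1 hsat
        show sol (x'.union w) u .FF = true
        have hxMD : x' .MD = none := samedom_none hdom _ hhMD
        have hxB : x' .B = none := samedom_none hdom _ hhB
        have hxFF : x' .FF = none := samedom_none hdom _ hhFF
        have hUMD : (x'.union w) .MD = w .MD := by simp [PA.union, hxMD]
        have hUB : (x'.union w) .B = w .B := by simp [PA.union, hxB]
        have hUFF : (x'.union w) .FF = w .FF := by simp [PA.union, hxFF]
        rw [sol_FF, hUMD, hUB, hUFF]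
        have hmd : (w .MD).getD (u .uMD) = true := by
          have := getD_actual hw' .MD
          simp only [sol, pa0, Option.getD_none] at this
          rw [this, hMD]
        have hb : (w .B).getD (u .uB) = true := by
          have := getD_actual hw' .B
          simp only [sol, pa0, Option.getD_none] at this
          rw [this, hB]
        rw [hmd, hb]
        cases hwFF : w .FF with
        | none => rfl
        | some v =>
          have := hw' .FF v hwFF
          simp only [sol, pa0, Option.getD_none] at this
          simp [← this, hL]
    | none =>
      cases hhMD : h .MD with
      | none =>
        exact not_weak_none u hL h (fun i => by cases i <;> assumption) hwk
      | some v =>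
        -- h = {MD = 1}: intervening on MD cannot falsify FF since L = 1 stays actual
        obtain ⟨-, w, x', hdom, hw, hsat⟩ := hwk
        have hw' := (sat_M u _).1 hw
        apply (sat_int _ u _).1 hsat
        show sol (x'.union w) u .FF = true
        have hxL : x' .L = none := samedom_none hdom _ hhL
        have hxFF : x' .FF = none := samedom_none hdom _ hhFF
        have hUL : (x'.union w) .L = w .L := by simp [PA.union, hxL]
        have hUFF : (x'.union w) .FF = w .FF := by simp [PA.union, hxFF]
        rw [sol_FF, hUL, hUFF]
        have hl : (w .L).getD (u .uL) = true := by
          have := getD_actual hw' .L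
          simp only [sol, pa0, Option.getD_none] at this
          rw [this, hL]
        rw [hl, Bool.or_true]
        cases hwFF : w .FF with
        | none => rfl
        | some v =>
          have := hw' .FF v hwFF
          simp only [sol, pa0, Option.getD_none] at this
          simp [← this, hL]

/-- In a context with u_L = 1, u_MD = 0, L = 1 is an actual cause of FF = 1. -/
lemma ac_L1 (u : Ctx (fun _ : XU => Bool)) (hL : u .uL = true)
    (hMDf : u .uMD = false) : ActualCause M u paL1 φFF := by
  refine ⟨⟨?_, ?_⟩, ?_⟩
  · refine (sat_M u _).2 ⟨?_, ?_⟩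
    · intro i v hv
      cases i <;> simp_all [paL1, sol, pa0]
    · show sol pa0 u .FF = true
      simp [sol, pa0, hL]
  · refine ⟨pa0, paL0, ?_, ?_, ?_⟩
    · intro i; cases i <;> simp [paL0, paL1, PA.sameDom]
    · refine (sat_M u _).2 ?_
      intro i v hv; simp [pa0] at hv
    · refine (sat_int _ u _).2 ?_
      show ¬ sol (paL0.union pa0) u .FF = true
      simp [sol, PA.union, paL0, pa0, hMDf]
  · rintro h ⟨hsub, hne⟩ hwk
    have hhMD : h .MD = none := by
      cases hh : h .MD with
      | none => rfl
      | some v => simpa [paL1] using hsub _ v hh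
    have hhB : h .B = none := by
      cases hh : h .B with
      | none => rfl
      | some v => simpa [paL1] using hsub _ v hh
    have hhFF : h .FF = none := by
      cases hh : h .FF with
      | none => rfl
      | some v => simpa [paL1] using hsub _ v hh
    have hhL : h .L = none := by
      cases hh : h .L with
      | none => rfl
      | some v =>
        have hv : v = true := by simpa [paL1] using hsub _ v hh
        subst hv
        exact absurd (funext fun j => by cases j <;> simp [paL1, hh, hhMD, hhB, hhFF]) hne
    exact not_weak_none u hL h (fun i => by cases i <;> assumption) hwk

end OFF

namespace OFF
open Causal

/-- No all-`none` assignment satisfies EX1' for FF = 1 (it intersects no actual cause). -/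
lemma not_EX1'_none (h : PA (fun _ : XV => Bool)) (hall : ∀ i, h i = none) :
    ¬ EX1' M K h φFF := by
  intro hEX
  obtain ⟨ha, -⟩ := hEX (fun _ => true) ⟨rfl, Or.inr rfl⟩
  have hsat : M.sat (fun _ => true) (fun s => h.event s ∧ φFF s) := by
    refine (sat_M _ _).2 ⟨?_, ?_⟩
    · intro i v hv; rw [hall i] at hv; cases hv
    · show sol pa0 (fun _ => true) .FF = true
      simp [sol, pa0]
  obtain ⟨i, v, c, hiv, -, -⟩ := ha hsat
  rw [hall i] at hiv; cases hiv

lemma ssub_paMD1 {h : PA (fun _ : XV => Bool)} (hs : h.ssubset paMD1) :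
    ∀ i, h i = none := by
  obtain ⟨hsub, hne⟩ := hs
  have hhL : h .L = none := by
    cases hh : h .L with
    | none => rfl
    | some v => simpa [paMD1] using hsub _ v hh
  have hhB : h .B = none := by
    cases hh : h .B with
    | none => rfl
    | some v => simpa [paMD1] using hsub _ v hh
  have hhFF : h .FF = none := by
    cases hh : h .FF with
    | none => rfl
    | some v => simpa [paMD1] using hsub _ v hh
  have hhMD : h .MD = none := by
    cases hh : h .MD with
    | none => rfl
    | some v =>
      have hv : v = true := by simpa [paMD1] using hsub _ v hh
      subst hv
      exact absurd (funext fun j => by cases j <;> simp [paMD1, hh, hhL, hhB, hhFF]) hne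
  intro i; cases i <;> assumption

lemma ssub_paL1 {h : PA (fun _ : XV => Bool)} (hs : h.ssubset paL1) :
    ∀ i, h i = none := by
  obtain ⟨hsub, hne⟩ := hs
  have hhMD : h .MD = none := by
    cases hh : h .MD with
    | none => rfl
    | some v => simpa [paL1] using hsub _ v hh
  have hhB : h .B = none := by
    cases hh : h .B with
    | none => rfl
    | some v => simpa [paL1] using hsub _ v hh
  have hhFF : h .FF = none := by
    cases hh : h .FF with
    | none => rfl
    | some v => simpa [paL1] using hsub _ v hh
  have hhL : h .L = none := by
    cases hh : h .L with
    | none => rfl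
    | some v =>
      have hv : v = true := by simpa [paL1] using hsub _ v hh
      subst hv
      exact absurd (funext fun j => by cases j <;> simp [paL1, hh, hhMD, hhB, hhFF]) hne
  intro i; cases i <;> assumption

end OFF


/-- in the overdetermined forest fire model, MD = 1 is a non-trivial
    modified HP explanation of FF = 1, while L = 1 is a modified HP explanation
    for which EX4' fails. -/
theorem off_modExpl_MD_and_L :
    Causal.ModExplNT OFF.M OFF.K OFF.paMD1 OFF.φFF ∧
    Causal.ModExpl OFF.M OFF.K OFF.paL1 OFF.φFF ∧
    ¬ Causal.EX4' OFF.M OFF.K OFF.paL1 OFF.φFF := by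
  open Causal OFF in
  refine ⟨⟨⟨?_, ?_, ?_⟩, ?_⟩, ⟨?_, ?_, ?_⟩, ?_⟩
  · -- EX1' for MD = 1
    intro u hu
    constructor
    · intro hsat
      have h1 := (sat_M u _).1 hsat
      have hMDt : u .uMD = true := h1.1 .MD true rfl
      have hBt : u .uB = true := hu.2.resolve_left (by simp [hMDt])
      exact ⟨.MD, true, paL1MD1, rfl, rfl, ac_L1MD1 u hu.1 hMDt hBt⟩
    · refine (sat_int _ u _).2 ?_
      show sol paMD1 u .FF = true
      simp [sol, paMD1, hu.1]
  · -- minimality for MD = 1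
    intro h hss
    exact not_EX1'_none h (ssub_paMD1 hss)
  · -- EX3' for MD = 1
    refine ⟨fun _ => true, ⟨rfl, Or.inr rfl⟩, (sat_M _ _).2 ⟨?_, ?_⟩⟩
    · intro i v hv
      cases i <;> simp_all [paMD1, sol, pa0]
    · show sol pa0 (fun _ => true) .FF = true
      simp [sol, pa0]
  · -- EX4' for MD = 1
    refine ⟨fun x => match x with | .uMD => false | _ => true,
      ⟨rfl, Or.inl rfl⟩, (sat_M _ _).2 ⟨?_, ?_⟩⟩
    · intro hev
      have := hev .MD true rfl
      simp [sol, pa0] at this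
    · show sol pa0 _ .FF = true
      simp [sol, pa0]
  · -- EX1' for L = 1
    intro u hu
    constructor
    · intro _
      rcases hu.2 with hMDf | hBt
      · exact ⟨.L, true, paL1, rfl, rfl, ac_L1 u hu.1 hMDf⟩
      · cases hMDv : u .uMD with
        | false => exact ⟨.L, true, paL1, rfl, rfl, ac_L1 u hu.1 hMDv⟩
        | true => exact ⟨.L, true, paL1MD1, rfl, rfl, ac_L1MD1 u hu.1 hMDv hBt⟩
    · refine (sat_int _ u _).2 ?_
      show sol paL1 u .FF = true
      simp [sol, paL1]
  · -- minimality for L = 1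
    intro h hss
    exact not_EX1'_none h (ssub_paL1 hss)
  · -- EX3' for L = 1
    refine ⟨fun _ => true, ⟨rfl, Or.inr rfl⟩, (sat_M _ _).2 ⟨?_, ?_⟩⟩
    · intro i v hv
      cases i <;> simp_all [paL1, sol, pa0]
    · show sol pa0 (fun _ => true) .FF = true
      simp [sol, pa0]
  · -- ¬ EX4' for L = 1
    rintro ⟨u, hu, hsat⟩
    obtain ⟨hne, -⟩ := (sat_M u _).1 hsat
    apply hne
    intro i v hv
    cases i <;> simp_all [paL1, sol, pa0]
    exact hu.1
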